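/- arXiv:0712.3019 — 6 statements merged into one kernel-verified Lean document; each statement's English description precedes it below -/
import Mathlib

section
/- Let G be a finite group of order n ≥ 3. Then there exists a unique real number Θ in the interval [1/2, 1] satisfying 2·Θ·log n = log(∑_{x ∈ G} exp(Θ · (log n) · |C(x)|/n)). (Equivalently, the function f(ξ) = 2ξ·log n − log ∑_{x ∈ G} exp(ξ·(log n)·|C(x)|/n) is continuous and strictly increasing on [1/2, 1], is negative at ξ = 1/2, and is nonnegative at ξ = 1.) -/
/-!
Write `n = |G|`, `L = log n` and `c x = |C(x)|/n ∈ (0, 1]`, so that the function in question is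
`f ξ = 2ξL - log S ξ` with `S ξ = ∑ₓ exp (ξ L c x)`. Since `c x ≤ 1`, raising `ξ` by `δ ≥ 0`
multiplies `S` by at most `exp (δ L) = n^δ`, so `f` grows at least like `ξ L` and is strictly
increasing. At `ξ = 1/2` every term of `S` exceeds `1` (as `c x > 0`), so `S (1/2) > n` and `f < 0`;
at `ξ = 1` every term is at most `exp L = n`, so `S 1 ≤ n²` and `f ≥ 0`. The intermediate value
theorem and injectivity give the unique root.
-/

/-- The defining equation for the group invariant `Θ(G)`:
`2·Θ·log n = log (∑_{x ∈ G} exp (Θ · log n · |C(x)|/n))`, where `n = |G|` and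
`C(x)` is the centralizer of `x` in `G`. -/
def ThetaEqn (G : Type*) [Group G] [Fintype G] (θ : ℝ) : Prop :=
  2 * θ * Real.log (Fintype.card G) =
    Real.log (∑ x : G, Real.exp (θ * Real.log (Fintype.card G) *
      ((Nat.card (Subgroup.centralizer ({x} : Set G)) : ℝ) / (Fintype.card G : ℝ))))

/-- The function `f(ξ) = 2ξ·log n − log ∑_{x ∈ G} exp(ξ·log n·|C(x)|/n)`. -/
noncomputable def thetaFun (G : Type*) [Group G] [Fintype G] (ξ : ℝ) : ℝ :=
  2 * ξ * Real.log (Fintype.card G) -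
    Real.log (∑ x : G, Real.exp (ξ * Real.log (Fintype.card G) *
      ((Nat.card (Subgroup.centralizer ({x} : Set G)) : ℝ) / (Fintype.card G : ℝ))))

open Real

theorem existsUnique_eq_zero_of_strictMonoOn {f : ℝ → ℝ} {a b : ℝ} (hab : a ≤ b)
    (hcont : ContinuousOn f (Set.Icc a b)) (hmono : StrictMonoOn f (Set.Icc a b))
    (ha : f a ≤ 0) (hb : 0 ≤ f b) : ∃! x, x ∈ Set.Icc a b ∧ f x = 0 := by
  obtain ⟨x, hx, hfx⟩ := intermediate_value_Icc hab hcont ⟨ha, hb⟩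
  exact ⟨x, ⟨hx, hfx⟩, fun y ⟨hy, hfy⟩ => hmono.injOn hy hx (hfy.trans hfx.symm)⟩

section gapFun

variable {ι : Type*} [Fintype ι]

noncomputable def expSum (L : ℝ) (c : ι → ℝ) (ξ : ℝ) : ℝ :=
  ∑ i, exp (ξ * L * c i)

theorem expSum_pos [Nonempty ι] (L : ℝ) (c : ι → ℝ) (ξ : ℝ) : 0 < expSum L c ξ :=
  Finset.sum_pos (fun _ _ => exp_pos _) Finset.univ_nonempty

theorem continuous_expSum (L : ℝ) (c : ι → ℝ) : Continuous (expSum L c) := by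
  unfold expSum
  fun_prop

theorem expSum_le_exp_mul_expSum {L : ℝ} {c : ι → ℝ} (hL : 0 ≤ L) (hc : ∀ i, c i ≤ 1)
    {a b : ℝ} (hab : a ≤ b) : expSum L c b ≤ exp ((b - a) * L) * expSum L c a := by
  rw [expSum, expSum, Finset.mul_sum]
  refine Finset.sum_le_sum fun i _ => ?_
  rw [← exp_add, exp_le_exp]
  have : (b - a) * L * c i ≤ (b - a) * L :=
    mul_le_of_le_one_right (mul_nonneg (sub_nonneg.2 hab) hL) (hc i)
  linarith

theorem card_lt_expSum [Nonempty ι] {L : ℝ} {c : ι → ℝ} (hL : 0 < L) (hc : ∀ i, 0 < c i)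
    {ξ : ℝ} (hξ : 0 < ξ) : (Fintype.card ι : ℝ) < expSum L c ξ := by
  calc (Fintype.card ι : ℝ) = ∑ _i : ι, 1 := by simp
    _ < expSum L c ξ := Finset.sum_lt_sum_of_nonempty Finset.univ_nonempty fun i _ =>
      one_lt_exp_iff.2 (mul_pos (mul_pos hξ hL) (hc i))

theorem expSum_le_card_mul_exp {L : ℝ} {c : ι → ℝ} (hc : ∀ i, c i ≤ 1) {ξ : ℝ}
    (hξL : 0 ≤ ξ * L) : expSum L c ξ ≤ Fintype.card ι * exp (ξ * L) := by
  calc expSum L c ξ ≤ ∑ _i : ι, exp (ξ * L) :=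
        Finset.sum_le_sum fun i _ => exp_le_exp.2 (mul_le_of_le_one_right hξL (hc i))
    _ = Fintype.card ι * exp (ξ * L) := by simp

noncomputable def gapFun (c : ι → ℝ) (ξ : ℝ) : ℝ :=
  2 * ξ * log (Fintype.card ι) - log (expSum (log (Fintype.card ι)) c ξ)

theorem continuous_gapFun [Nonempty ι] (c : ι → ℝ) : Continuous (gapFun c) := by
  refine (by fun_prop : Continuous fun ξ : ℝ => 2 * ξ * log (Fintype.card ι)).sub ?_
  exact (continuous_expSum _ c).log fun ξ => (expSum_pos _ c ξ).ne'

theorem strictMono_gapFun (hι : 1 < Fintype.card ι) {c : ι → ℝ} (hc : ∀ i, c i ≤ 1) :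
    StrictMono (gapFun c) := by
  have : Nonempty ι := Fintype.card_pos_iff.1 (by omega)
  intro a b hab
  unfold gapFun
  set L := log (Fintype.card ι)
  have hL : 0 < L := log_pos (by exact_mod_cast hι)
  have hlog : log (expSum L c b) ≤ (b - a) * L + log (expSum L c a) := by
    calc log (expSum L c b) ≤ log (exp ((b - a) * L) * expSum L c a) :=
          log_le_log (expSum_pos L c b) (expSum_le_exp_mul_expSum hL.le hc hab.le)
      _ = _ := by rw [log_mul (exp_pos _).ne' (expSum_pos L c a).ne', log_exp]
  nlinarith

theorem gapFun_half_neg (hι : 1 < Fintype.card ι) {c : ι → ℝ} (hc : ∀ i, 0 < c i) :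
    gapFun c (1 / 2) < 0 := by
  have : Nonempty ι := Fintype.card_pos_iff.1 (by omega)
  have hn : (0 : ℝ) < Fintype.card ι := by exact_mod_cast Fintype.card_pos
  have hL : 0 < log (Fintype.card ι) := log_pos (by exact_mod_cast hι)
  have hS := log_lt_log hn (card_lt_expSum hL hc one_half_pos)
  unfold gapFun
  linarith

theorem gapFun_one_nonneg [Nonempty ι] {c : ι → ℝ} (hc : ∀ i, c i ≤ 1) : 0 ≤ gapFun c 1 := by
  have hn : (0 : ℝ) < Fintype.card ι := by exact_mod_cast Fintype.card_pos
  have hL : 0 ≤ log (Fintype.card ι) := log_nonneg (by exact_mod_cast Fintype.card_pos)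
  have hS := log_le_log (expSum_pos _ c 1) (expSum_le_card_mul_exp hc (by simpa using hL))
  rw [one_mul, exp_log hn, log_mul hn.ne' hn.ne'] at hS
  unfold gapFun
  linarith

end gapFun

theorem card_centralizer_div_card_mem_Ioc {G : Type*} [Group G] [Fintype G] (x : G) :
    (Nat.card (Subgroup.centralizer ({x} : Set G)) : ℝ) / Fintype.card G ∈ Set.Ioc 0 1 := by
  have hle : Nat.card (Subgroup.centralizer ({x} : Set G)) ≤ Fintype.card G :=
    Nat.card_eq_fintype_card (α := G) ▸ Subgroup.card_le_card_group _
  refine ⟨div_pos (by exact_mod_cast Nat.card_pos) (by exact_mod_cast Fintype.card_pos), ?_⟩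
  exact div_le_one_of_le₀ (by exact_mod_cast hle) (Nat.cast_nonneg _)

theorem thetaEqn_iff_thetaFun_eq_zero {G : Type*} [Group G] [Fintype G] (θ : ℝ) :
    ThetaEqn G θ ↔ thetaFun G θ = 0 :=
  sub_eq_zero.symm

/-- For a finite group `G` of order `n ≥ 3` there is a unique `Θ ∈ [1/2, 1]` with
`2·Θ·log n = log (∑_{x ∈ G} exp (Θ · log n · |C(x)|/n))`.  Equivalently, the function
`f(ξ) = 2ξ·log n − log ∑_x exp(ξ·log n·|C(x)|/n)` is continuous and strictly increasing
on `[1/2, 1]`, negative at `1/2` and nonnegative at `1`. -/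
theorem theta_exists_unique (G : Type*) [Group G] [Fintype G]
    (hG : 3 ≤ Fintype.card G) :
    (∃! θ : ℝ, θ ∈ Set.Icc (1/2 : ℝ) 1 ∧ ThetaEqn G θ) ∧
    ContinuousOn (thetaFun G) (Set.Icc (1/2 : ℝ) 1) ∧
    StrictMonoOn (thetaFun G) (Set.Icc (1/2 : ℝ) 1) ∧
    thetaFun G (1/2) < 0 ∧ 0 ≤ thetaFun G 1 := by
  set c : G → ℝ := fun x => (Nat.card (Subgroup.centralizer ({x} : Set G)) : ℝ) / Fintype.card G
  have hf : thetaFun G = gapFun c := rfl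
  have hc := card_centralizer_div_card_mem_Ioc (G := G)
  have hcont := (continuous_gapFun c).continuousOn (s := Set.Icc (1/2 : ℝ) 1)
  have hmono :=
    (strictMono_gapFun (by omega) fun x => (hc x).2).strictMonoOn (Set.Icc (1/2 : ℝ) 1)
  have hhalf := gapFun_half_neg (by omega) fun x => (hc x).1
  have hone := gapFun_one_nonneg fun x => (hc x).2
  rw [hf]
  refine ⟨?_, hcont, hmono, hhalf, hone⟩
  simpa only [thetaEqn_iff_thetaFun_eq_zero, hf] using
    existsUnique_eq_zero_of_strictMonoOn (by norm_num) hcont hmono hhalf.le hone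
end

section
/- Let G be a finite group of order n ≥ 3 and let Z(G) = {g ∈ G : ∀ x ∈ G, g*x = x*g} be its center. Then Θ(G) ≤ max{ (2/3)·(1 + log 2 / log n), (log|Z(G)| + log 2) / log n }. -/
/-!
With `t = θ · log n`, the defining equation says `exp (2t) = ∑ₓ exp (t · |C(x)|/n)`.
A central `x` contributes `exp t`; for a non-central `x` the centralizer is a proper subgroup,
so `|C(x)| ≤ n/2` and the term is at most `exp (t/2)`. Hence
`exp (2t) ≤ |Z| exp t + n exp (t/2)`, and whichever summand dominates gives `exp t ≤ 2|Z|`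
or `exp (3t/2) ≤ 2n`.
-/

open Real Subgroup

lemma Subgroup.two_mul_card_le_of_ne_top {G : Type*} [Group G] [Finite G] {H : Subgroup G}
    (hH : H ≠ ⊤) : 2 * Nat.card H ≤ Nat.card G := by
  rw [← H.card_mul_index, mul_comm]
  exact Nat.mul_le_mul_left _ (H.one_lt_index_of_ne_top hH)

lemma Subgroup.two_mul_card_centralizer_le_of_notMem_center {G : Type*} [Group G] [Finite G]
    {x : G} (hx : x ∉ center G) : 2 * Nat.card (centralizer {x}) ≤ Nat.card G :=
  two_mul_card_le_of_ne_top fun h ↦ hx (centralizer_eq_top_iff_subset.mp h rfl)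

section CentralizerExp

variable {G : Type*} [Group G] [Finite G] {t : ℝ}

lemma exp_mul_card_centralizer_div_le (ht : 0 ≤ t) (x : G) :
    exp (t * (Nat.card (centralizer {x}) / Nat.card G)) ≤ exp t := by
  have hG : (0 : ℝ) < Nat.card G := by exact_mod_cast Nat.card_pos
  refine exp_le_exp.mpr (mul_le_of_le_one_right ht ?_)
  rw [div_le_one hG]
  exact_mod_cast Subgroup.card_le_card_group _

lemma exp_mul_card_centralizer_div_le_of_notMem_center (ht : 0 ≤ t) {x : G}
    (hx : x ∉ center G) :
    exp (t * (Nat.card (centralizer {x}) / Nat.card G)) ≤ exp (t / 2) := by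
  have hG : (0 : ℝ) < Nat.card G := by exact_mod_cast Nat.card_pos
  rw [exp_le_exp, div_eq_mul_one_div t 2]
  refine mul_le_mul_of_nonneg_left ?_ ht
  rw [div_le_div_iff₀ hG two_pos, one_mul, mul_comm]
  exact_mod_cast two_mul_card_centralizer_le_of_notMem_center hx

end CentralizerExp

lemma sum_exp_mul_card_centralizer_div_le {G : Type*} [Group G] [Fintype G] {t : ℝ}
    (ht : 0 ≤ t) :
    ∑ x : G, exp (t * (Nat.card (centralizer {x}) / Fintype.card G)) ≤
      Nat.card (center G) * exp t + Fintype.card G * exp (t / 2) := by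
  classical
  calc ∑ x : G, exp (t * (Nat.card (centralizer {x}) / Fintype.card G))
      ≤ ∑ x : G, ((if x ∈ center G then exp t else 0) + exp (t / 2)) := by
        refine Finset.sum_le_sum fun x _ ↦ ?_
        rw [← Nat.card_eq_fintype_card]
        split_ifs with hx
        · linarith [exp_mul_card_centralizer_div_le ht x, exp_pos (t / 2)]
        · simpa using exp_mul_card_centralizer_div_le_of_notMem_center ht hx
    _ = Nat.card (center G) * exp t + Fintype.card G * exp (t / 2) := by
        rw [Finset.sum_add_distrib, ← Finset.sum_filter]
        simp [Nat.card_eq_fintype_card, Fintype.card_subtype]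

lemma le_log_two_mul_or_of_exp_two_mul_le {t a b : ℝ}
    (h : exp (2 * t) ≤ a * exp t + b * exp (t / 2)) :
    t ≤ log (2 * a) ∨ 3 / 2 * t ≤ log (2 * b) := by
  rcases le_total (b * exp (t / 2)) (a * exp t) with hab | hab
  · have hsplit : exp (2 * t) = exp t * exp t := by rw [← exp_add, two_mul]
    have hle : exp t ≤ 2 * a := le_of_mul_le_mul_right (by linarith) (exp_pos t)
    exact .inl ((le_log_iff_exp_le ((exp_pos t).trans_le hle)).mpr hle)
  · have hsplit : exp (2 * t) = exp (3 / 2 * t) * exp (t / 2) := by rw [← exp_add]; ring_nf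
    have hle : exp (3 / 2 * t) ≤ 2 * b :=
      le_of_mul_le_mul_right (by linarith) (exp_pos (t / 2))
    exact .inr ((le_log_iff_exp_le ((exp_pos _).trans_le hle)).mpr hle)

/-- If `G` is a finite group of order `n ≥ 3` with center `Z(G)`, then
`Θ(G) ≤ max { (2/3)·(1 + log 2 / log n), (log |Z(G)| + log 2) / log n }`. -/
theorem theta_upper_bound (G : Type*) [Group G] [Fintype G]
    (hG : 3 ≤ Fintype.card G)
    (θ : ℝ) (hθ : θ ∈ Set.Icc (1/2 : ℝ) 1) (hθeq : ThetaEqn G θ) :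
    θ ≤ max ((2/3) * (1 + Real.log 2 / Real.log (Fintype.card G)))
      ((Real.log (Nat.card (Subgroup.center G)) + Real.log 2) / Real.log (Fintype.card G)) := by
  set n := Fintype.card G
  have hn : (1 : ℝ) < n := by exact_mod_cast (by omega : 1 < n)
  have hlog : 0 < log n := log_pos hn
  have ht : 0 ≤ θ * log n := mul_nonneg (by linarith [hθ.1]) hlog.le
  have hexp : exp (2 * (θ * log n)) ≤
      Nat.card (center G) * exp (θ * log n) + n * exp (θ * log n / 2) := by
    rw [← mul_assoc, hθeq, exp_log (Finset.sum_pos (fun x _ ↦ exp_pos _) Finset.univ_nonempty)]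
    exact sum_exp_mul_card_centralizer_div_le ht
  rcases le_log_two_mul_or_of_exp_two_mul_le hexp with h | h
  · refine le_max_of_le_right ?_
    have hZ : (Nat.card (center G) : ℝ) ≠ 0 := Nat.cast_ne_zero.mpr Nat.card_pos.ne'
    rwa [le_div_iff₀ hlog, add_comm, ← log_mul two_ne_zero hZ]
  · refine le_max_of_le_left ?_
    rw [log_mul two_ne_zero (by positivity)] at h
    have hrhs : 2 / 3 * (1 + log 2 / log n) = 2 / 3 * (log 2 + log n) / log n := by
      field_simp; ring
    rw [hrhs, le_div_iff₀ hlog]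
    linarith
end

section
/- Let G be a finite group of order n ≥ 3. Then G is abelian if and only if Θ(G) = 1. -/
open Real

section

variable {G : Type*} [Group G] [Fintype G]

lemma card_centralizer_singleton_le (x : G) :
    Nat.card (Subgroup.centralizer ({x} : Set G)) ≤ Fintype.card G :=
  Nat.card_eq_fintype_card (α := G) ▸ Subgroup.card_le_card_group _

lemma card_centralizer_singleton_lt_of_mul_ne {a b : G} (h : a * b ≠ b * a) :
    Nat.card (Subgroup.centralizer ({a} : Set G)) < Fintype.card G := by
  refine (card_centralizer_singleton_le a).lt_of_ne fun hcard => h ?_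
  rw [← Nat.card_eq_fintype_card, Subgroup.card_eq_iff_eq_top] at hcard
  exact (Subgroup.mem_centralizer_singleton_iff.mp (hcard ▸ Subgroup.mem_top b)).symm

lemma card_centralizer_singleton_eq_of_comm (hcomm : ∀ a b : G, a * b = b * a) (x : G) :
    Nat.card (Subgroup.centralizer ({x} : Set G)) = Fintype.card G := by
  rw [← Nat.card_eq_fintype_card, Subgroup.card_eq_iff_eq_top, eq_top_iff]
  exact fun g _ => Subgroup.mem_centralizer_singleton_iff.mpr (hcomm g x)

lemma thetaEqn_iff_of_comm (hn : 1 < Fintype.card G) (hcomm : ∀ a b : G, a * b = b * a)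
    (θ : ℝ) : ThetaEqn G θ ↔ θ = 1 := by
  have hn0 : (0 : ℝ) < Fintype.card G := by positivity
  have hlog : 0 < log (Fintype.card G) := log_pos (by exact_mod_cast hn)
  have hsum : ∑ x : G, exp (θ * log (Fintype.card G) *
      ((Nat.card (Subgroup.centralizer ({x} : Set G)) : ℝ) / (Fintype.card G : ℝ))) =
      Fintype.card G * exp (θ * log (Fintype.card G)) := by
    simp only [card_centralizer_singleton_eq_of_comm hcomm, div_self hn0.ne', mul_one,
      Finset.sum_const, Finset.card_univ, nsmul_eq_mul]
  rw [ThetaEqn, hsum, log_mul hn0.ne' (exp_ne_zero _), log_exp]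
  constructor
  · intro h
    nlinarith
  · rintro rfl
    ring

lemma exp_log_card_mul_centralizer_ratio_le (x : G) :
    exp (log (Fintype.card G) *
      ((Nat.card (Subgroup.centralizer ({x} : Set G)) : ℝ) / Fintype.card G)) ≤
      Fintype.card G := by
  have hn0 : (0 : ℝ) < Fintype.card G := by exact_mod_cast Fintype.card_pos
  rw [← rpow_def_of_pos hn0]
  refine rpow_le_self_of_one_le (by exact_mod_cast Fintype.card_pos) ?_
  exact (div_le_one hn0).mpr (by exact_mod_cast card_centralizer_singleton_le x)

lemma exp_log_card_mul_centralizer_ratio_lt {a b : G} (h : a * b ≠ b * a) :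
    exp (log (Fintype.card G) *
      ((Nat.card (Subgroup.centralizer ({a} : Set G)) : ℝ) / Fintype.card G)) <
      Fintype.card G := by
  have hlt := card_centralizer_singleton_lt_of_mul_ne h
  have hn0 : (0 : ℝ) < Fintype.card G := by exact_mod_cast Fintype.card_pos
  have hn1 : (1 : ℝ) < Fintype.card G := by
    have := Nat.card_pos (α := Subgroup.centralizer ({a} : Set G))
    exact_mod_cast (show 1 < Fintype.card G by omega)
  rw [← rpow_def_of_pos hn0]
  conv_rhs => rw [← rpow_one (Fintype.card G : ℝ)]
  exact rpow_lt_rpow_of_exponent_lt hn1 ((div_lt_one hn0).mpr (by exact_mod_cast hlt))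

lemma comm_of_thetaEqn_one (h : ThetaEqn G 1) : ∀ a b : G, a * b = b * a := by
  by_contra! ⟨a, b, hab⟩
  have hn0 : (0 : ℝ) < Fintype.card G := by exact_mod_cast Fintype.card_pos
  rw [ThetaEqn] at h
  simp only [mul_one, one_mul] at h
  have hsum_eq : ∑ x : G, exp (log (Fintype.card G) *
      ((Nat.card (Subgroup.centralizer ({x} : Set G)) : ℝ) / Fintype.card G)) =
      Fintype.card G * Fintype.card G := by
    rw [← exp_log (Finset.sum_pos (fun _ _ => exp_pos _) Finset.univ_nonempty), ← h, two_mul,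
      exp_add, exp_log hn0]
  have hsum_lt : ∑ x : G, exp (log (Fintype.card G) *
      ((Nat.card (Subgroup.centralizer ({x} : Set G)) : ℝ) / Fintype.card G)) <
      ∑ _x : G, (Fintype.card G : ℝ) :=
    Finset.sum_lt_sum (fun x _ => exp_log_card_mul_centralizer_ratio_le x)
      ⟨a, Finset.mem_univ a, exp_log_card_mul_centralizer_ratio_lt hab⟩
  simp only [Finset.sum_const, Finset.card_univ, nsmul_eq_mul] at hsum_lt
  exact hsum_lt.ne hsum_eq

end

theorem theta_eq_one_iff_abelian_general (G : Type*) [Group G] [Fintype G]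
    (hG : 3 ≤ Fintype.card G)
    (θ : ℝ) (hθeq : ThetaEqn G θ) :
    (∀ a b : G, a * b = b * a) ↔ θ = 1 := by
  constructor
  · intro hcomm
    exact (thetaEqn_iff_of_comm (by omega) hcomm θ).mp hθeq
  · rintro rfl
    exact comm_of_thetaEqn_one hθeq

/-- A finite group `G` of order `n ≥ 3` is abelian if and only if `Θ(G) = 1`. -/
theorem theta_eq_one_iff_abelian (G : Type*) [Group G] [Fintype G]
    (hG : 3 ≤ Fintype.card G)
    (θ : ℝ) (hθ : θ ∈ Set.Icc (1/2 : ℝ) 1) (hθeq : ThetaEqn G θ) :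
    (∀ a b : G, a * b = b * a) ↔ θ = 1 :=
  theta_eq_one_iff_abelian_general G hG θ hθeq
end

section
/- Let G be a finite group of order n ≥ 3 and let R = R(G) be the number of conjugacy classes of G. Then Θ(G) ≥ 1/(2 − R/n), and in particular Θ(G) > 1/2. -/
/-!
Jensen's inequality for `exp` bounds `log ∑ₓ exp (θ L |C(x)| / n)` below by `L + θ L · (mean of
|C(x)|) / n`, where `L = log n`. The mean centralizer order is `R` (Burnside: `∑ₓ |C(x)| = R n`),
so the defining equation of `Θ` gives `2θL ≥ L + θLR/n`, i.e. `θ (2 - R/n) ≥ 1`; and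
`2 - R/n < 2` because `R ≥ 1`.
-/

open Real

theorem sum_card_centralizer (G : Type*) [Group G] [Fintype G] :
    ∑ x : G, Nat.card (Subgroup.centralizer ({x} : Set G)) =
      Nat.card (ConjClasses G) * Nat.card G := by
  rw [← card_comm_eq_card_conjClasses_mul_card,
    Nat.card_congr (Equiv.subtypeProdEquivSigmaSubtype Commute), Nat.card_sigma]
  refine Finset.sum_congr rfl fun x _ => Nat.card_congr (Equiv.subtypeEquivRight fun y => ?_)
  rw [Subgroup.mem_centralizer_singleton_iff]
  exact eq_comm

theorem card_conjClasses_le_card (G : Type*) [Group G] [Finite G] :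
    Nat.card (ConjClasses G) ≤ Nat.card G :=
  Nat.card_le_card_of_surjective _ ConjClasses.mk_surjective

theorem Real.log_card_add_mean_le_log_sum_exp {ι : Type*} [Fintype ι] [Nonempty ι]
    (f : ι → ℝ) :
    log (Fintype.card ι) + (∑ i, f i) / Fintype.card ι ≤ log (∑ i, exp (f i)) := by
  have hn : (0 : ℝ) < Fintype.card ι := by positivity
  have jensen : exp (∑ i, (Fintype.card ι : ℝ)⁻¹ • f i) ≤
      ∑ i, (Fintype.card ι : ℝ)⁻¹ • exp (f i) :=
    convexOn_exp.map_sum_le (fun _ _ => by positivity)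
      (by simp [Finset.card_univ, hn.ne']) (fun _ _ => Set.mem_univ _)
  simp only [smul_eq_mul, ← Finset.mul_sum] at jensen
  rw [← exp_le_exp, exp_add, exp_log hn, exp_log (by positivity), div_eq_inv_mul]
  exact (le_inv_mul_iff₀ hn).mp jensen

theorem ThetaEqn.one_le_mul_two_sub {G : Type*} [Group G] [Fintype G]
    (hG : 2 ≤ Fintype.card G) {θ : ℝ} (hθ : ThetaEqn G θ) :
    1 ≤ θ * (2 - (Nat.card (ConjClasses G) : ℝ) / Fintype.card G) := by
  set n : ℝ := (Fintype.card G : ℝ)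
  set R : ℝ := (Nat.card (ConjClasses G) : ℝ)
  have hn : 0 < n := by positivity
  have hL : 0 < log n := log_pos (by unfold n; exact_mod_cast hG)
  have hsum : ∑ x : G, θ * log n * ((Nat.card (Subgroup.centralizer ({x} : Set G)) : ℝ) / n) =
      θ * log n * R := by
    rw [← Finset.mul_sum, ← Finset.sum_div]
    have := congrArg (Nat.cast (R := ℝ)) (sum_card_centralizer G)
    push_cast [Nat.card_eq_fintype_card] at this
    rw [this, mul_div_cancel_right₀ _ hn.ne']
  have jensen := log_card_add_mean_le_log_sum_exp
    fun x : G => θ * log n * ((Nat.card (Subgroup.centralizer ({x} : Set G)) : ℝ) / n)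
  rw [hsum, ← hθ] at jensen
  have hscaled : log n * (1 + θ * (R / n)) ≤ log n * (2 * θ) := by
    calc log n * (1 + θ * (R / n)) = log n + θ * log n * R / n := by ring
      _ ≤ 2 * θ * log n := jensen
      _ = log n * (2 * θ) := by ring
  linarith [le_of_mul_le_mul_left hscaled hL]

theorem theta_ge_conj_classes_general (G : Type*) [Group G] [Fintype G]
    (hG : 3 ≤ Fintype.card G)
    (θ : ℝ) (hθeq : ThetaEqn G θ) :
    1 / (2 - (Nat.card (ConjClasses G) : ℝ) / (Fintype.card G : ℝ)) ≤ θ ∧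
    (1 : ℝ) / 2 < 1 / (2 - (Nat.card (ConjClasses G) : ℝ) / (Fintype.card G : ℝ)) := by
  have hn : (0 : ℝ) < Fintype.card G := by positivity
  have hR : (0 : ℝ) < Nat.card (ConjClasses G) := by exact_mod_cast Nat.card_pos
  have hRn : (Nat.card (ConjClasses G) : ℝ) ≤ Fintype.card G := by
    exact_mod_cast Nat.card_eq_fintype_card (α := G) ▸ card_conjClasses_le_card G
  have hden : 1 ≤ 2 - (Nat.card (ConjClasses G) : ℝ) / Fintype.card G := by
    linarith [(div_le_one hn).mpr hRn]
  constructor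
  · rw [div_le_iff₀ (by linarith)]
    linarith [hθeq.one_le_mul_two_sub (by omega)]
  · apply one_div_lt_one_div_of_lt (by linarith)
    linarith [div_pos hR hn]

/-- If `G` is a finite group of order `n ≥ 3` with `R` conjugacy classes, then
`Θ(G) ≥ 1/(2 − R/n) > 1/2`. -/
theorem theta_ge_conj_classes (G : Type*) [Group G] [Fintype G]
    (hG : 3 ≤ Fintype.card G)
    (θ : ℝ) (hθ : θ ∈ Set.Icc (1/2 : ℝ) 1) (hθeq : ThetaEqn G θ) :
    1 / (2 - (Nat.card (ConjClasses G) : ℝ) / (Fintype.card G : ℝ)) ≤ θ ∧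
    (1 : ℝ) / 2 < 1 / (2 - (Nat.card (ConjClasses G) : ℝ) / (Fintype.card G : ℝ)) :=
  theta_ge_conj_classes_general G hG θ hθeq
end

section
/- Let m ≥ 2 and let D_{2m} be the dihedral group of order n = 2m. Then (2/3)·(1 − log 2 / log n) ≤ Θ(D_{2m}) ≤ (2/3)·(1 + log 2 / log n). -/
open Real Subgroup Finset

noncomputable def centralizerExpSum (G : Type*) [Group G] [Fintype G] (t : ℝ) : ℝ :=
  ∑ x : G, exp (t * ((Nat.card (centralizer ({x} : Set G)) : ℝ) / (Fintype.card G : ℝ)))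

section Centralizer

variable {G : Type*} [Group G]

theorem Subgroup.card_le_card_centralizer_singleton [Finite G] {A : Subgroup G}
    [IsMulCommutative A] {x : G} (hx : x ∈ A) :
    Nat.card A ≤ Nat.card (centralizer ({x} : Set G)) :=
  card_le_of_le ((le_centralizer (H := A)).trans (centralizer_le (Set.singleton_subset_iff.2 hx)))

theorem Subgroup.two_mul_card_centralizer_singleton_le [Finite G] {x : G} (hx : x ∉ center G) :
    2 * Nat.card (centralizer ({x} : Set G)) ≤ Nat.card G := by
  have hne : centralizer ({x} : Set G) ≠ ⊤ := fun h =>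
    hx (Set.singleton_subset_iff.1 (centralizer_eq_top_iff_subset.1 h))
  rw [← card_mul_index (centralizer ({x} : Set G)), mul_comm]
  exact Nat.mul_le_mul_left _ (one_lt_index_of_ne_top hne)

end Centralizer

namespace centralizerExpSum

variable {G : Type*} [Group G] [Fintype G] {t : ℝ}

theorem card_mul_exp_le (ht : 0 ≤ t) (A : Subgroup G) [IsMulCommutative A] :
    Nat.card A * exp (t * (Nat.card A / Fintype.card G)) ≤ centralizerExpSum G t := by
  classical
  have hA : Nat.card A = #{x | x ∈ A} := by
    rw [Nat.card_eq_fintype_card, Fintype.card_subtype]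
  calc (Nat.card A : ℝ) * exp (t * (Nat.card A / Fintype.card G))
      = ∑ x ∈ {x | x ∈ A}, exp (t * (Nat.card A / Fintype.card G)) := by
        rw [Finset.sum_const, nsmul_eq_mul, hA]
    _ ≤ ∑ x ∈ {x | x ∈ A},
          exp (t * (Nat.card (centralizer ({x} : Set G)) / Fintype.card G)) := by
        refine Finset.sum_le_sum fun x hx => ?_
        gcongr
        exact card_le_card_centralizer_singleton (Finset.mem_filter.1 hx).2
    _ ≤ centralizerExpSum G t :=
        Finset.sum_le_sum_of_subset_of_nonneg (Finset.subset_univ _) fun _ _ _ => (exp_pos _).le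

theorem le_card_center_mul_exp_add (ht : 0 ≤ t) :
    centralizerExpSum G t ≤ Nat.card (center G) * exp t + Fintype.card G * exp (t / 2) := by
  classical
  have hn : (0 : ℝ) < Fintype.card G := by exact_mod_cast Fintype.card_pos
  have hterm (x : G) : exp (t * (Nat.card (centralizer ({x} : Set G)) / Fintype.card G)) ≤
      (if x ∈ center G then exp t else 0) + exp (t / 2) := by
    have hC : (Nat.card (centralizer ({x} : Set G)) : ℝ) ≤ Fintype.card G := by
      exact_mod_cast (card_le_card_group _).trans Nat.card_eq_fintype_card.le
    split_ifs with hx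
    · have : exp (t * (Nat.card (centralizer ({x} : Set G)) / Fintype.card G)) ≤ exp t := by
        gcongr
        exact mul_le_of_le_one_right ht ((div_le_one hn).2 hC)
      linarith [(exp_pos (t / 2)).le]
    · have h2 : 2 * (Nat.card (centralizer ({x} : Set G)) : ℝ) ≤ Fintype.card G := by
        exact_mod_cast (two_mul_card_centralizer_singleton_le hx).trans_eq Nat.card_eq_fintype_card
      rw [zero_add]
      gcongr
      rw [mul_div_assoc', div_le_div_iff₀ hn two_pos]
      nlinarith
  calc centralizerExpSum G t
      ≤ ∑ x, ((if x ∈ center G then exp t else 0) + exp (t / 2)) :=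
        Finset.sum_le_sum fun x _ => hterm x
    _ = Nat.card (center G) * exp t + Fintype.card G * exp (t / 2) := by
        rw [Finset.sum_add_distrib, ← Finset.sum_filter, Finset.sum_const, Finset.sum_const,
          nsmul_eq_mul, nsmul_eq_mul, Finset.card_univ, Nat.card_eq_fintype_card,
          Fintype.card_subtype]

theorem pos : 0 < centralizerExpSum G t :=
  Finset.sum_pos (fun _ _ => exp_pos _) Finset.univ_nonempty

end centralizerExpSum

namespace ThetaEqn

variable {G : Type*} [Group G] [Fintype G] {θ : ℝ}

theorem exp_eq (h : ThetaEqn G θ) :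
    exp (2 * θ * log (Fintype.card G)) = centralizerExpSum G (θ * log (Fintype.card G)) := by
  rw [h]
  exact exp_log centralizerExpSum.pos

theorem log_card_add_le (h : ThetaEqn G θ) (hθ : 0 ≤ θ) (A : Subgroup G) [IsMulCommutative A] :
    log (Nat.card A) + θ * log (Fintype.card G) * (Nat.card A / Fintype.card G) ≤
      2 * θ * log (Fintype.card G) := by
  have hL : 0 ≤ log (Fintype.card G) := log_nonneg (by exact_mod_cast Fintype.card_pos)
  rw [← log_exp (2 * θ * _), h.exp_eq, ← log_exp (_ * (_ / _)),
    ← log_mul (by exact_mod_cast Nat.card_pos.ne') (exp_pos _).ne']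
  exact log_le_log (mul_pos (by exact_mod_cast Nat.card_pos) (exp_pos _))
    (centralizerExpSum.card_mul_exp_le (by positivity) A)

theorem le_log_two_mul_card_add (h : ThetaEqn G θ) (hθ₀ : 0 ≤ θ) (hθ₁ : θ ≤ 1)
    (hZ : Nat.card (center G) ≤ 2) (hn : 4 ≤ Fintype.card G) :
    2 * θ * log (Fintype.card G) ≤
      log (2 * Fintype.card G) + θ * log (Fintype.card G) / 2 := by
  have hn4 : (4 : ℝ) ≤ Fintype.card G := by exact_mod_cast hn
  set n : ℝ := (Fintype.card G : ℝ)
  set t := θ * log n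
  have hZ' : (Nat.card (center G) : ℝ) ≤ 2 := by exact_mod_cast hZ
  have ht : 0 ≤ t := mul_nonneg hθ₀ (log_nonneg (by linarith))
  set u := exp (t / 2)
  have hu : 0 < u := exp_pos _
  have hsq : exp t = u * u := by rw [← exp_add, add_halves]
  have hu_sq : u * u ≤ n := by
    rw [← hsq, ← exp_log (show 0 < n by linarith)]
    gcongr
    exact mul_le_of_le_one_left (log_nonneg (by linarith)) hθ₁
  have hu_le : 2 * u ≤ n := by nlinarith
  have hS : centralizerExpSum G t ≤ 2 * n * u :=
    calc centralizerExpSum G t ≤ Nat.card (center G) * exp t + n * u :=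
          centralizerExpSum.le_card_center_mul_exp_add ht
      _ ≤ 2 * n * u := by rw [hsq]; nlinarith
  rw [← log_exp (2 * θ * _), h.exp_eq, ← log_exp (t / 2),
    ← log_mul (by positivity) hu.ne']
  exact log_le_log centralizerExpSum.pos hS

end ThetaEqn

namespace DihedralGroup

variable {m : ℕ}

theorem card_zpowers_r_one : Nat.card (zpowers (r 1 : DihedralGroup m)) = m := by
  rw [Nat.card_zpowers, orderOf_r_one]

theorem center_subset_image_r (hm : 3 ≤ m) :
    (center (DihedralGroup m) : Set (DihedralGroup m)) ⊆ r '' {i | 2 • i = 0} := by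
  rintro (i | i) hx <;> rw [SetLike.mem_coe, mem_center_iff] at hx
  · refine ⟨i, ?_, rfl⟩
    have : i = -i := by simpa using sr.inj (hx (sr 0))
    show 2 • i = 0
    rw [two_nsmul]
    linear_combination this
  · have : i - 1 = i + 1 := sr.inj (hx (r 1))
    have h2 : ((2 : ℕ) : ZMod m) = 0 := by push_cast; linear_combination -this
    rw [ZMod.natCast_eq_zero_iff] at h2
    exact absurd (Nat.le_of_dvd two_pos h2) (by omega)

theorem card_center_le_two [NeZero m] (hm : 3 ≤ m) :
    Nat.card (center (DihedralGroup m)) ≤ 2 := by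
  classical
  calc Nat.card (center (DihedralGroup m))
      = (center (DihedralGroup m) : Set (DihedralGroup m)).ncard := (Nat.card_coe_set_eq _).symm
    _ ≤ (r '' {i : ZMod m | 2 • i = 0}).ncard := Set.ncard_le_ncard (center_subset_image_r hm)
    _ ≤ {i : ZMod m | 2 • i = 0}.ncard := Set.ncard_image_le
    _ = #{i : ZMod m | 2 • i = 0} := by rw [Set.ncard_eq_toFinset_card']; simp
    _ ≤ 2 := IsAddCyclic.card_nsmul_eq_zero_le two_pos

end DihedralGroup

open DihedralGroup in
/-- For the dihedral group `D_{2m}` of order `n = 2m` (with `m ≥ 2`):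
`(2/3)·(1 − log 2 / log n) ≤ Θ(D_{2m}) ≤ (2/3)·(1 + log 2 / log n)`. -/
theorem theta_dihedral (m : ℕ) [NeZero m] (hm : 2 ≤ m)
    (θ : ℝ) (hθ : θ ∈ Set.Icc (1/2 : ℝ) 1)
    (hθeq : ThetaEqn (DihedralGroup m) θ) :
    (2/3) * (1 - Real.log 2 / Real.log (2 * m)) ≤ θ ∧
    θ ≤ (2/3) * (1 + Real.log 2 / Real.log (2 * m)) := by
  obtain ⟨hθ₀, hθ₁⟩ := hθ
  have hm₀ : (0 : ℝ) < m := by positivity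
  have hL : 0 < log (2 * m) := log_pos (by norm_cast; omega)
  have hlog : log (2 * m) = log 2 + log m := log_mul two_ne_zero hm₀.ne'
  constructor
  · have hlow := hθeq.log_card_add_le (by linarith) (zpowers (r 1))
    rw [DihedralGroup.card, card_zpowers_r_one, Nat.cast_mul, Nat.cast_two,
      div_mul_cancel_right₀ hm₀.ne'] at hlow
    rw [mul_one_sub, mul_div_assoc', sub_le_comm, le_div_iff₀ hL]
    linarith
  · rcases hm.eq_or_lt with rfl | hm₃
    · have : log (2 * 2) = 2 * log 2 := by rw [← log_rpow two_pos]; norm_num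
      rw [Nat.cast_two, this, div_mul_cancel_right₀ (log_pos one_lt_two).ne']
      linarith
    · have hup := hθeq.le_log_two_mul_card_add (by linarith) hθ₁ (card_center_le_two hm₃)
        (by rw [DihedralGroup.card]; omega)
      rw [DihedralGroup.card, Nat.cast_mul, Nat.cast_two,
        log_mul two_ne_zero (by positivity : 2 * (m : ℝ) ≠ 0)] at hup
      rw [mul_one_add, mul_div_assoc', ← sub_le_iff_le_add', le_div_iff₀ hL]
      linarith
end

section
/- Let S_m denote the symmetric group on m letters. Then Θ(S_m) → 1/2 as m → ∞; that is, for every ε > 0 there exists M such that for all m ≥ M, 1/2 ≤ Θ(S_m) ≤ 1/2 + ε. -/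
/-!
A non-identity permutation `x` of an `m`-element set has at least `m - 1` conjugates (conjugating
by a suitable transposition moves a chosen point of the support of `x` anywhere else), so
`|C(x)|/n ≤ 1/(m - 1)` for `x ≠ 1`. Bounding the identity term of the sum defining `Θ` by `n` and
every other term by `n ^ (1/(m - 1))` gives `n ^ (2Θ) ≤ 2 n ^ (1 + 1/(m - 1))`, and since
`log 2 ≤ log (m!)/(m - 1)` this yields `Θ ≤ 1/2 + 1/(m - 1)`.
-/

open Real Set

namespace Equiv.Perm

variable {α : Type*} [DecidableEq α]

lemma swap_mul_mul_swap_apply {x : Perm α} {a c : α} (ha : x a ≠ a) (hc : c ≠ a) :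
    (swap (x a) c * x * swap (x a) c) a = c := by
  simp only [mul_apply, swap_apply_of_ne_of_ne ha.symm hc.symm, swap_apply_left]

variable [Fintype α]

lemma card_sub_one_le_ncard_orbit_conjAct {x : Perm α} (hx : x ≠ 1) :
    Fintype.card α - 1 ≤ (MulAction.orbit (ConjAct (Perm α)) x).ncard := by
  obtain ⟨a, ha⟩ : ∃ a, x a ≠ a := by
    by_contra! h
    exact hx (Equiv.ext h)
  have hcompl : ({a}ᶜ : Set α).ncard = Fintype.card α - 1 := by
    rw [ncard_eq_toFinset_card', toFinset_compl, toFinset_singleton, Finset.card_compl,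
      Finset.card_singleton]
  rw [← hcompl]
  refine ncard_le_ncard_of_injOn (fun c ↦ swap (x a) c * x * swap (x a) c) ?_ ?_
  · intro c _
    refine ⟨ConjAct.toConjAct (swap (x a) c), ?_⟩
    simp only [ConjAct.toConjAct_smul, swap_inv]
  · intro c hc c' hc' h
    simpa only [swap_mul_mul_swap_apply ha hc, swap_mul_mul_swap_apply ha hc'] using
      DFunLike.congr_fun h a

lemma card_sub_one_mul_card_centralizer_le {x : Perm α} (hx : x ≠ 1) :
    (Fintype.card α - 1) * Nat.card (Subgroup.centralizer {x}) ≤ Nat.card (Perm α) := by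
  change _ ≤ Nat.card (ConjAct (Perm α))
  rw [Subgroup.nat_card_centralizer_nat_card_stabilizer,
    ← (MulAction.stabilizer (ConjAct (Perm α)) x).card_mul_index, MulAction.index_stabilizer,
    mul_comm]
  exact Nat.mul_le_mul_left _ (card_sub_one_le_ncard_orbit_conjAct hx)

end Equiv.Perm

lemma nat_mul_log_two_le_log_factorial (n : ℕ) : n * log 2 ≤ log ((n + 1).factorial : ℝ) := by
  have h : (2 : ℝ) ^ n ≤ (n + 1).factorial := by
    have := @Nat.factorial_mul_pow_le_factorial 1 n
    rw [Nat.factorial_one, one_mul, one_add_one_eq_two, add_comm 1 n] at this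
    exact_mod_cast this
  simpa only [log_pow] using log_le_log (by positivity) h

section Theta

variable {G : Type*} [Group G] [Fintype G]

lemma sum_exp_centralizer_le {θ δ : ℝ} (hθ : θ ∈ Icc 0 1) (hδ : 0 ≤ δ)
    (hC : ∀ x : G, x ≠ 1 → (Nat.card (Subgroup.centralizer {x}) : ℝ) ≤ δ * Fintype.card G) :
    ∑ x : G, exp (θ * log (Fintype.card G) *
        ((Nat.card (Subgroup.centralizer ({x} : Set G)) : ℝ) / (Fintype.card G : ℝ))) ≤
      2 * exp ((1 + δ) * log (Fintype.card G)) := by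
  classical
  have hn : (0 : ℝ) < Fintype.card G := by exact_mod_cast Fintype.card_pos
  have hL : 0 ≤ log (Fintype.card G) := log_nonneg (by exact_mod_cast Fintype.card_pos)
  have hcard_le (x : G) : (Nat.card (Subgroup.centralizer {x}) : ℝ) ≤ Fintype.card G := by
    rw [← Nat.card_eq_fintype_card]
    exact_mod_cast Subgroup.card_le_card_group _
  have herase : ((Finset.univ.erase (1 : G)).card : ℝ) ≤ Fintype.card G := by
    exact_mod_cast Finset.card_erase_le
  set n : ℝ := (Fintype.card G : ℝ)
  set L := log n
  have hterm : ∀ x : G, exp (θ * L * (Nat.card (Subgroup.centralizer {x}) / n)) ≤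
      exp (L * (Nat.card (Subgroup.centralizer {x}) / n)) := fun x ↦ by
    gcongr
    exact mul_le_of_le_one_left hL hθ.2
  have hone : exp (θ * L * (Nat.card (Subgroup.centralizer {(1 : G)}) / n)) ≤
      exp ((1 + δ) * L) := by
    have hle : (Nat.card (Subgroup.centralizer {(1 : G)}) : ℝ) / n ≤ 1 := by
      rw [div_le_one hn]
      exact hcard_le 1
    refine (hterm 1).trans (exp_le_exp.2 ?_)
    nlinarith [mul_le_of_le_one_right hL hle]
  have hrest : ∑ x ∈ Finset.univ.erase (1 : G),
      exp (θ * L * (Nat.card (Subgroup.centralizer {x}) / n)) ≤ exp ((1 + δ) * L) := by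
    calc _ ≤ ∑ _x ∈ Finset.univ.erase (1 : G), exp (δ * L) := by
          refine Finset.sum_le_sum fun x hx ↦ (hterm x).trans (exp_le_exp.2 ?_)
          rw [mul_comm δ]
          exact mul_le_mul_of_nonneg_left
            ((div_le_iff₀ hn).2 (hC x (Finset.ne_of_mem_erase hx))) hL
      _ ≤ n * exp (δ * L) := by
          rw [Finset.sum_const, nsmul_eq_mul]
          gcongr
      _ = exp ((1 + δ) * L) := by rw [add_mul, one_mul, exp_add, exp_log hn]
  rw [← Finset.add_sum_erase _ _ (Finset.mem_univ 1)]
  linarith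

lemma ThetaEqn.two_mul_mul_log_le {θ δ : ℝ} (hθ : θ ∈ Icc 0 1) (hδ : 0 ≤ δ)
    (hC : ∀ x : G, x ≠ 1 → (Nat.card (Subgroup.centralizer {x}) : ℝ) ≤ δ * Fintype.card G)
    (h : ThetaEqn G θ) :
    2 * θ * log (Fintype.card G) ≤ log 2 + (1 + δ) * log (Fintype.card G) := by
  rw [h, ← log_exp ((1 + δ) * _), ← log_mul two_ne_zero (exp_ne_zero _)]
  exact log_le_log (Finset.sum_pos (fun _ _ ↦ exp_pos _) Finset.univ_nonempty)
    (sum_exp_centralizer_le hθ hδ hC)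

end Theta

lemma ThetaEqn.le_one_div_two_add_one_div_card_sub_one {α : Type*} [Fintype α] [DecidableEq α]
    (hα : 2 ≤ Fintype.card α) {θ : ℝ} (hθ : θ ∈ Icc 0 1) (h : ThetaEqn (Equiv.Perm α) θ) :
    θ ≤ 1 / 2 + 1 / (Fintype.card α - 1) := by
  obtain ⟨k, hk⟩ : ∃ k, Fintype.card α = k + 1 := ⟨_, (Nat.sub_add_cancel (by omega)).symm⟩
  have hk0 : (0 : ℝ) < k := by exact_mod_cast (by omega : 0 < k)
  have hcard : (Fintype.card (Equiv.Perm α) : ℝ) = (k + 1).factorial := by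
    rw [Fintype.card_perm, hk]
  have hC : ∀ x : Equiv.Perm α, x ≠ 1 → (Nat.card (Subgroup.centralizer {x}) : ℝ) ≤
      1 / k * Fintype.card (Equiv.Perm α) := fun x hx ↦ by
    have := Equiv.Perm.card_sub_one_mul_card_centralizer_le hx
    rw [hk, Nat.add_sub_cancel, Nat.card_eq_fintype_card (α := Equiv.Perm α)] at this
    rw [one_div_mul_eq_div, le_div_iff₀ hk0, mul_comm]
    exact_mod_cast this
  have hmain := h.two_mul_mul_log_le hθ (by positivity) hC
  rw [hcard] at hmain
  set L := log ((k + 1).factorial : ℝ)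
  have hlog2 : k * log 2 ≤ L := nat_mul_log_two_le_log_factorial k
  have hL : 0 < L := (mul_pos hk0 (log_pos one_lt_two)).trans_le hlog2
  have hlog2' : log 2 ≤ 1 / k * L := by rwa [one_div_mul_eq_div, le_div_iff₀' hk0]
  have : 2 * θ ≤ 1 + 2 * (1 / k) := le_of_mul_le_mul_right (by linarith) hL
  rw [hk, Nat.cast_add_one, add_sub_cancel_right]
  linarith

/-- `Θ(S_m) = 1/2 + o(1)` as `m → ∞`: for every `ε > 0` there is `M` such that for all
`m ≥ M`, `1/2 ≤ Θ(S_m) ≤ 1/2 + ε`. -/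
theorem theta_symmetric_group (ε : ℝ) (hε : 0 < ε) :
    ∃ M : ℕ, ∀ m : ℕ, M ≤ m →
      ∀ θ : ℝ, θ ∈ Set.Icc (1/2 : ℝ) 1 → ThetaEqn (Equiv.Perm (Fin m)) θ →
        1/2 ≤ θ ∧ θ ≤ 1/2 + ε := by
  refine ⟨⌈1 / ε⌉₊ + 2, fun m hm θ hθ h ↦ ⟨hθ.1, ?_⟩⟩
  have hθ' : θ ∈ Icc 0 1 := ⟨by linarith [hθ.1], hθ.2⟩
  have hbound :=
    h.le_one_div_two_add_one_div_card_sub_one (by simp only [Fintype.card_fin]; omega) hθ'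
  rw [Fintype.card_fin] at hbound
  have hm : 1 / ε + 1 ≤ (m : ℝ) - 1 := by
    have : (⌈1 / ε⌉₊ : ℝ) + 2 ≤ m := by exact_mod_cast hm
    linarith [Nat.le_ceil (1 / ε)]
  have hsmall : 1 / ((m : ℝ) - 1) ≤ ε :=
    (one_div_le (by linarith [one_div_pos.2 hε]) hε).2 (by linarith)
  linarith
end
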